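/- arXiv:2006.01041 — 4 statements merged into one kernel-verified Lean document; each statement's English description precedes it below -/
import Mathlib

section
/- Let A be a finite set of integers with minimum element 0, maximum element b, and gcd of its elements equal to 1, and let B be the image of A in ℤ/bℤ. Let a be in the range 1 ≤ a ≤ b−1, let k ≥ 1, and suppose that |kB| ≥ b − N_{a,A}. Then n_{a,A} + (k−1)b ∈ NA whenever N ≥ 2k + b − |kB| − 1. -/
open Pointwise

/-- The `N`-fold sumset of a finite set `A` (sums of `N` not-necessarily-distinct elements),
with the `0`-fold sumset being `{0}`. -/
def nfold {α : Type*} [AddMonoid α] [DecidableEq α] (A : Finset α) : ℕ → Finset α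
  | 0 => {0}
  | n + 1 => nfold A n + A

/-- `postP A` is the set of integers expressible as a finite (nonempty) sum of elements of `A`. -/
def postP (A : Finset ℤ) : Set ℤ := {n | ∃ N : ℕ, 1 ≤ N ∧ n ∈ nfold A N}

/-- The exceptional set `E(A)`. -/
def postE (A : Finset ℤ) : Set ℤ := {n | 1 ≤ n ∧ n ∉ postP A}

/-- `n_{a,A}`: the least `n ≥ 1` with `n ∈ P(A)` and `n ≡ a (mod b)`. -/
noncomputable def nmin (A : Finset ℤ) (b a : ℤ) : ℤ :=
  sInf {n : ℤ | 1 ≤ n ∧ n ∈ postP A ∧ n % b = a % b}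

/-- `N_{a,A}`: the least `N ≥ 1` with `n_{a,A} ∈ NA`. -/
noncomputable def Nmin (A : Finset ℤ) (b a : ℤ) : ℕ :=
  sInf {N : ℕ | 1 ≤ N ∧ nmin A b a ∈ nfold A N}

/-- `N_A^* = max_{1 ≤ a ≤ b-1} N_{a,A}`. -/
noncomputable def Nstar (A : Finset ℤ) (b : ℤ) : ℕ :=
  (Finset.Icc 1 (b - 1)).sup (fun a => Nmin A b a)

/-!
Write `n_{a,A} = a₁ + ⋯ + a_M` with `M = N_{a,A}` and `aⱼ ∈ A`. The partial sums `σ₀, …, σ_M`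
are pairwise incongruent mod `b`: if `σᵢ ≡ σₗ` with `i < l`, deleting `a_{i+1}, …, a_l` yields
either a smaller element of `P(A)` congruent to `a` or a representation of `n_{a,A}` with fewer
than `M` summands. As `b - |kB| ≤ M`, pigeonhole gives `i ≤ b - |kB|` with `a - σᵢ ∈ kB`. Lifting
this residue to `τ ∈ k(A ∖ {b}) ⊆ [0, k(b - 1)]`, the sum `y = σᵢ + τ ∈ (i + k)A` is congruent to
`a` and `n_{a,A} ≤ y ≤ n_{a,A} + k(b - 1)`, so `y = n_{a,A} + ub` with `0 ≤ u ≤ k - 1`; adding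
`k - 1 - u` copies of `b ∈ A` gives `n_{a,A} + (k - 1)b ∈ (i + 2k - 1 - u)A ⊆ NA`.
-/

open Finset

lemma nfold_eq_nsmul {α : Type*} [AddMonoid α] [DecidableEq α] (A : Finset α) :
    ∀ n, nfold A n = n • A
  | 0 => rfl
  | n + 1 => by rw [nfold, nfold_eq_nsmul A n, succ_nsmul]

section Sumset

variable {α : Type*} [DecidableEq α]

lemma List.sum_mem_nsmul [AddMonoid α] {s : Finset α} {L : List α} (hL : ∀ x ∈ L, x ∈ s) :
    L.sum ∈ L.length • s := by
  induction L with
  | nil => simp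
  | cons x L ih =>
    rw [List.sum_cons, List.length_cons, succ_nsmul']
    exact add_mem_add (hL x List.mem_cons_self) (ih fun y hy => hL y (List.mem_cons_of_mem x hy))

lemma Finset.exists_list_of_mem_nsmul [AddMonoid α] {s : Finset α} {a : α} {n : ℕ}
    (ha : a ∈ n • s) : ∃ L : List α, L.length = n ∧ (∀ x ∈ L, x ∈ s) ∧ L.sum = a := by
  obtain ⟨f, rfl⟩ := mem_nsmul.1 ha
  exact ⟨List.ofFn fun i => (f i : α), List.length_ofFn, by simp [List.mem_ofFn], rfl⟩

lemma Finset.sum_nsmul_mem_nsmul [AddCommMonoid α] {ι : Type*} {s : Finset α} (t : Finset ι)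
    (c : ι → ℕ) {x : ι → α} (hx : ∀ i ∈ t, x i ∈ s) :
    ∑ i ∈ t, c i • x i ∈ (∑ i ∈ t, c i) • s := by
  induction t using Finset.cons_induction with
  | empty => simp
  | cons i t hi ih =>
    rw [sum_cons, sum_cons, add_nsmul]
    exact add_mem_add (nsmul_mem_nsmul (hx i (mem_cons_self i t)))
      (ih fun j hj => hx j (mem_cons_of_mem hj))

variable [AddCommMonoid α] [PartialOrder α] [IsOrderedAddMonoid α] {s : Finset α}

lemma Finset.le_nsmul_of_mem_nsmul {c : α} (hs : ∀ x ∈ s, x ≤ c) :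
    ∀ {n : ℕ} {a : α}, a ∈ n • s → a ≤ n • c
  | 0, a, ha => by simp_all
  | n + 1, _, ha => by
    obtain ⟨y, hy, x, hx, rfl⟩ := mem_add.1 (succ_nsmul s n ▸ ha)
    rw [succ_nsmul]
    exact add_le_add (le_nsmul_of_mem_nsmul hs hy) (hs x hx)

lemma Finset.nsmul_le_of_mem_nsmul {c : α} (hs : ∀ x ∈ s, c ≤ x) {n : ℕ} {a : α}
    (ha : a ∈ n • s) : n • c ≤ a :=
  le_nsmul_of_mem_nsmul (α := αᵒᵈ) hs ha

end Sumset

section Minimal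

variable {A : Finset ℤ} {b : ℕ} {a n : ℤ} {N : ℕ}

lemma mem_postP_of_mem_nsmul (hn : n ∈ N • A) (hn0 : n ≠ 0) : n ∈ postP A :=
  ⟨N, Nat.one_le_iff_ne_zero.2 (by rintro rfl; simp_all), by rwa [nfold_eq_nsmul]⟩

lemma one_le_of_mem_nsmul_of_emod_eq (hA : ∀ x ∈ A, 0 ≤ x) (ha : a % b ≠ 0)
    (hn : n ∈ N • A) (hna : n % b = a % b) : 1 ≤ n := by
  have hn0 : 0 ≤ n := by simpa using nsmul_le_of_mem_nsmul hA hn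
  by_contra h
  rw [show n = 0 by omega, Int.zero_emod] at hna
  exact ha hna.symm

lemma exists_mem_postP_emod_eq (hA : ∀ x ∈ A, 0 ≤ x) (hgcd : A.gcd id = 1) (hb : b ≠ 0)
    (ha : a % b ≠ 0) : ∃ n, 1 ≤ n ∧ n ∈ postP A ∧ n % b = a % b := by
  obtain ⟨g, hg⟩ := A.gcd_eq_sum_mul id
  have hn := sum_nsmul_mem_nsmul A (fun x => (a * g x % b).toNat) (s := A) fun x hx => hx
  have hna : (∑ x ∈ A, (a * g x % b).toNat • x) % b = a % b := by
    rw [← ZMod.intCast_eq_intCast_iff', ← mul_one (a : ZMod b), ← Int.cast_one, ← hgcd, hg]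
    push_cast [mul_sum]
    refine sum_congr rfl fun x _ => ?_
    rw [nsmul_eq_mul, Int.cast_mul,
      Int.toNat_of_nonneg (Int.emod_nonneg _ (by exact_mod_cast hb)), ZMod.intCast_mod, id]
    push_cast
    ring
  have h1 := one_le_of_mem_nsmul_of_emod_eq hA ha hn hna
  exact ⟨_, h1, mem_postP_of_mem_nsmul hn (by omega), hna⟩

lemma nmin_mem (hA : ∀ x ∈ A, 0 ≤ x) (hgcd : A.gcd id = 1) (hb : b ≠ 0) (ha : a % b ≠ 0) :
    nmin A b a ∈ postP A ∧ nmin A b a % b = a % b :=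
  (Int.csInf_mem (exists_mem_postP_emod_eq hA hgcd hb ha) ⟨1, fun _ hn => hn.1⟩).2

lemma nmin_le_of_mem_nsmul (hA : ∀ x ∈ A, 0 ≤ x) (ha : a % b ≠ 0) (hn : n ∈ N • A)
    (hna : n % b = a % b) : nmin A b a ≤ n := by
  have h1 := one_le_of_mem_nsmul_of_emod_eq hA ha hn hna
  exact csInf_le ⟨1, fun _ hm => hm.1⟩ ⟨h1, mem_postP_of_mem_nsmul hn (by omega), hna⟩

lemma Nmin_mem (h : nmin A b a ∈ postP A) : nmin A b a ∈ Nmin A b a • A := by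
  rw [← nfold_eq_nsmul]
  exact (Nat.sInf_mem h).2

lemma Nmin_le (hN : 1 ≤ N) (h : nmin A b a ∈ N • A) : Nmin A b a ≤ N :=
  Nat.sInf_le ⟨hN, by rwa [nfold_eq_nsmul]⟩

variable {L : List ℤ}

lemma take_sum_ne_of_lt (hA : ∀ x ∈ A, 0 ≤ x) (hgcd : A.gcd id = 1) (hb : b ≠ 0)
    (ha : a % b ≠ 0) (hLA : ∀ x ∈ L, x ∈ A) (hsum : L.sum = nmin A b a)
    (hlen : L.length = Nmin A b a) {i l : ℕ} (hil : i < l) (hl : l ≤ L.length) :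
    ((L.take i).sum : ZMod b) ≠ (L.take l).sum := by
  intro heq
  set c := ((L.take l).drop i).sum
  set L' := L.take i ++ L.drop l
  have hc_take : (L.take l).sum = (L.take i).sum + c := by
    rw [← List.take_append_drop i (L.take l), List.sum_append, List.take_take,
      min_eq_left hil.le]
  have hc_sum : L.sum = L'.sum + c := by
    have := congrArg List.sum (List.take_append_drop l L)
    rw [List.sum_append, hc_take] at this
    simp only [L', List.sum_append]
    linarith
  have hc_dvd : (b : ℤ) ∣ c := by
    simpa [hc_take] using (ZMod.intCast_eq_intCast_iff_dvd_sub _ _ _).1 heq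
  have hL' : L'.sum ∈ (i + (L.length - l)) • A := by
    have hL'A : ∀ x ∈ L', x ∈ A := fun x hx => by
      rcases List.mem_append.1 hx with h | h
      exacts [hLA x (List.mem_of_mem_take h), hLA x (List.mem_of_mem_drop h)]
    simpa [L', Nat.min_eq_left (hil.le.trans hl)] using List.sum_mem_nsmul hL'A
  have hL'a : L'.sum % b = a % b := by
    obtain ⟨d, hd⟩ := hc_dvd
    rw [← (nmin_mem hA hgcd hb ha).2, ← hsum, hc_sum, hd, Int.add_mul_emod_self_left]
  have hle := nmin_le_of_mem_nsmul hA ha hL' hL'a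
  have hc0 : 0 ≤ c := List.sum_nonneg fun x hx => hA x (hLA x
    (List.mem_of_mem_take (List.mem_of_mem_drop hx)))
  have hL'1 := one_le_of_mem_nsmul_of_emod_eq hA ha hL' hL'a
  have hN : 1 ≤ i + (L.length - l) := Nat.one_le_iff_ne_zero.2 fun h0 => by
    rw [h0, zero_nsmul, mem_zero] at hL'
    omega
  have := Nmin_le hN (show nmin A b a ∈ _ by rwa [← hsum, hc_sum, show c = 0 by omega, add_zero])
  omega

lemma take_sum_injOn (hA : ∀ x ∈ A, 0 ≤ x) (hgcd : A.gcd id = 1) (hb : b ≠ 0)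
    (ha : a % b ≠ 0) (hLA : ∀ x ∈ L, x ∈ A) (hsum : L.sum = nmin A b a)
    (hlen : L.length = Nmin A b a) :
    Set.InjOn (fun i => ((L.take i).sum : ZMod b)) (Set.Iic L.length) := by
  intro i hi l hl heq
  rcases lt_trichotomy i l with hil | rfl | hli
  · exact absurd heq (take_sum_ne_of_lt hA hgcd hb ha hLA hsum hlen hil hl)
  · rfl
  · exact absurd heq.symm (take_sum_ne_of_lt hA hgcd hb ha hLA hsum hlen hli hi)

end Minimal

lemma exists_sub_mem_of_injOn {G : Type*} [AddGroup G] [Fintype G] [DecidableEq G]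
    (K : Finset G) (f : ℕ → G) (x : G) (hf : Set.InjOn f (Set.Iic (Fintype.card G - #K))) :
    ∃ i ≤ Fintype.card G - #K, x - f i ∈ K := by
  by_contra! h
  obtain ⟨i, hi, j, hj, hij, hfij⟩ := exists_ne_map_eq_of_card_lt_of_maps_to
    (s := range (Fintype.card G - #K + 1)) (t := Kᶜ) (f := fun i => x - f i)
    (by simp [card_compl]) (fun i hi => by simpa using h i (by simpa [Nat.lt_succ_iff] using hi))
  rw [mem_range, Nat.lt_succ_iff] at hi hj
  exact hij (hf hi hj (sub_right_injective hfij))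

lemma exists_lift_of_mem_nsmul_image {A : Finset ℤ} {b k : ℕ} (hb : b ≠ 0) (h0 : 0 ∈ A)
    (hA : ∀ x ∈ A, x ≤ b) {x : ZMod b}
    (hx : x ∈ k • A.image (fun x : ℤ => (x : ZMod b))) :
    ∃ t ∈ k • A, t ≤ k * (b - 1) ∧ (t : ZMod b) = x := by
  have himage : A.image (fun x : ℤ => (x : ZMod b)) = (A.erase b).image (Int.castAddHom _) := by
    ext y
    simp only [mem_image, mem_erase, Int.coe_castAddHom]
    constructor
    · rintro ⟨z, hz, rfl⟩
      by_cases hzb : z = b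
      · exact ⟨0, ⟨by omega, h0⟩, by simp [hzb]⟩
      · exact ⟨z, ⟨hzb, hz⟩, rfl⟩
    · rintro ⟨z, ⟨-, hz⟩, rfl⟩
      exact ⟨z, hz, rfl⟩
  rw [himage, ← image_nsmul] at hx
  obtain ⟨t, ht, rfl⟩ := mem_image.1 hx
  have hA' : ∀ y ∈ A.erase (b : ℤ), y ≤ b - 1 := fun y hy => by
    have := hA y (mem_of_mem_erase hy)
    have := ne_of_mem_erase hy
    omega
  refine ⟨t, nsmul_subset_nsmul_left (erase_subset _ _) ht, ?_, rfl⟩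
  simpa using le_nsmul_of_mem_nsmul hA' ht

lemma add_sub_one_mul_mem_nsmul {A : Finset ℤ} {b m y : ℤ} {k n : ℕ} (h0 : 0 ∈ A) (hb : b ∈ A)
    (hb0 : 0 < b) (hk : 1 ≤ k) (hy : y ∈ n • A) (hmy : m ≤ y) (hym : y ≤ m + k * (b - 1))
    (hdvd : b ∣ y - m) : m + ((k : ℤ) - 1) * b ∈ (n + (k - 1)) • A := by
  obtain ⟨u, hu⟩ := hdvd
  have hu0 : 0 ≤ u := by nlinarith
  have huk : u < k := by nlinarith
  lift u to ℕ using hu0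
  have hmem : y + (k - 1 - u) • b ∈ (n + (k - 1 - u)) • A :=
    add_nsmul A n _ ▸ add_mem_add hy (nsmul_mem_nsmul hb)
  have heq : m + ((k : ℤ) - 1) * b = y + (k - 1 - u) • b := by
    rw [nsmul_eq_mul, Nat.cast_sub (by omega), Nat.cast_sub hk]
    push_cast
    linarith
  rw [heq]
  exact nsmul_subset_nsmul_right h0 (by omega) hmem

lemma exists_mem_nsmul_emod_eq_le {A : Finset ℤ} {b k : ℕ} {a : ℤ} [NeZero b] (h0 : 0 ∈ A)
    (hA0 : ∀ x ∈ A, 0 ≤ x) (hAb : ∀ x ∈ A, x ≤ b) (hgcd : A.gcd id = 1) (ha : a % b ≠ 0)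
    (hkB : (b : ℤ) - Nmin A b a ≤ #(k • A.image (fun x : ℤ => (x : ZMod b)))) :
    ∃ y ∈ (b - #(k • A.image (fun x : ℤ => (x : ZMod b))) + k) • A,
      y % b = a % b ∧ y ≤ nmin A b a + k * (b - 1) := by
  set K := k • A.image (fun x : ℤ => (x : ZMod b))
  have hb := NeZero.ne b
  obtain ⟨L, hlen, hLA, hsum⟩ := exists_list_of_mem_nsmul (Nmin_mem (nmin_mem hA0 hgcd hb ha).1)
  have hK : #K ≤ b := by simpa using card_le_univ K
  have hinj := (take_sum_injOn hA0 hgcd hb ha hLA hsum hlen).mono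
    (Set.Iic_subset_Iic.2 (show Fintype.card (ZMod b) - #K ≤ L.length by
      rw [ZMod.card]; omega))
  obtain ⟨i, hi, hiK⟩ := exists_sub_mem_of_injOn K _ (a : ZMod b) hinj
  rw [ZMod.card] at hi
  obtain ⟨t, ht, htb, htc⟩ := exists_lift_of_mem_nsmul_image hb h0 hAb hiK
  have hσ : (L.take i).sum ∈ i • A := by
    have := List.sum_mem_nsmul (s := A) fun x hx => hLA x (List.mem_of_mem_take (i := i) hx)
    rwa [List.length_take, Nat.min_eq_left (by omega)] at this
  refine ⟨(L.take i).sum + t, nsmul_subset_nsmul_right h0 (by omega)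
    (add_nsmul A i k ▸ add_mem_add hσ ht), ?_, ?_⟩
  · rw [← ZMod.intCast_eq_intCast_iff', Int.cast_add, htc]
    ring
  · have := (List.take_sublist i L).sum_le_sum fun x hx => hA0 x (hLA x hx)
    omega

theorem stmt4 (b : ℕ) (A : Finset ℤ)
    (h0 : 0 ∈ A) (hb : (b : ℤ) ∈ A)
    (hmin : ∀ x ∈ A, 0 ≤ x) (hmax : ∀ x ∈ A, x ≤ (b : ℤ))
    (hgcd : A.gcd id = 1)
    (a : ℤ) (ha1 : 1 ≤ a) (ha2 : a ≤ (b : ℤ) - 1)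
    (k N : ℕ) (hk : 1 ≤ k)
    (hkB : (b : ℤ) - (Nmin A b a : ℤ) ≤
      ((nfold (A.image (fun x : ℤ => (x : ZMod b))) k).card : ℤ))
    (hN : 2 * (k : ℤ) + (b : ℤ) -
      ((nfold (A.image (fun x : ℤ => (x : ZMod b))) k).card : ℤ) - 1 ≤ (N : ℤ)) :
    nmin A b a + ((k : ℤ) - 1) * b ∈ nfold A N := by
  have ha : a % (b : ℤ) ≠ 0 := by
    rw [Int.emod_eq_of_lt (by omega) (by omega)]
    omega
  have : NeZero b := ⟨by omega⟩
  simp only [nfold_eq_nsmul] at hkB hN ⊢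
  obtain ⟨y, hy, hya, hym⟩ := exists_mem_nsmul_emod_eq_le h0 hmin hmax hgcd ha hkB
  have hmy := nmin_le_of_mem_nsmul hmin ha hy hya
  have hdvd : (b : ℤ) ∣ y - nmin A b a :=
    Int.ModEq.dvd ((nmin_mem hmin hgcd (NeZero.ne b) ha).2.trans hya.symm)
  have hK := card_le_univ (k • A.image (fun x : ℤ => (x : ZMod b)))
  rw [ZMod.card] at hK
  exact nsmul_subset_nsmul_right h0 (by omega)
    (add_sub_one_mul_mem_nsmul h0 hb (by omega) hk hy hmy hym hdvd)
end

section
/- Let A = {0 = a_0 < a_1 < ... < a_{ℓ+1} = b} be a finite set of integers with gcd(a_1, ..., a_{ℓ+1}) = 1 and 2 ≤ ℓ ≤ b−2. Then N_A* ≤ b − ℓ − 1, except when A = {0,1,...,b} \ {a} for some 1 ≤ a ≤ b−1 (in which case N_A* = 2 = b−ℓ), or when A = {0,1} ∪ {a+1,...,b} for some 2 ≤ a ≤ b−2 (in which case N_A* = b−ℓ). -/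
open Pointwise

/-!
Fix a class `a` mod `b` and a multiset `m` of elements of `A` representing `n_{a,A}` with
`N = N_{a,A}` summands. By minimality no proper nonempty sub-multiset of `m` sums to `0` mod `b`,
and no sub-multiset with at least two summands sums to an element of `A` mod `b` (it could be
exchanged for that element). So for any ordering of `m` the `N` prefix sums are distinct nonzero
residues of which only the first lies in `A`, and counting residues in `[0, b]` gives
`N + |A| ≤ b + 2`, i.e. `N ≤ b - ℓ`.

If `N = b - ℓ ≥ 3`, the prefix residues and `A` together cover `[0, b]`. Comparing two orderings
shows that all summands equal one `x`, and then the covering pins down `A`: `x = 1` gives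
`A = {0, 1} ∪ [N + 1, b]`, while `x ≥ 2` is impossible (if `1 ∈ A`, three copies of `x` can be
replaced by `2x + 1` and `x - 1`; if `1 ∉ A`, then `A ⊆ {0, x, b}`). The two exceptional families
are computed directly.
-/

open Finset (Icc Ioo)
open scoped Finset
open Multiset (card replicate)

theorem Int.ModEq.eq_of_nonneg_of_lt {a c b : ℤ} (h : a ≡ c [ZMOD b]) (ha0 : 0 ≤ a) (hab : a < b)
    (hc0 : 0 ≤ c) (hcb : c < b) : a = c := by
  rwa [Int.ModEq, Int.emod_eq_of_lt ha0 hab, Int.emod_eq_of_lt hc0 hcb] at h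

theorem not_dvd_of_modEq {a r b : ℤ} (h : a ≡ r [ZMOD b]) (hr0 : 0 < r) (hrb : r < b) :
    ¬ b ∣ a := fun hdvd =>
  hr0.ne' <| ((Int.modEq_zero_iff_dvd.2 hdvd).symm.trans h).symm.eq_of_nonneg_of_lt hr0.le hrb
    le_rfl (hr0.trans hrb)

theorem Multiset.card_le_sum_of_one_le {α : Type*} [Semiring α] [PartialOrder α]
    [IsOrderedRing α] {s : Multiset α} (h : ∀ x ∈ s, 1 ≤ x) : (card s : α) ≤ s.sum := by
  simpa using Multiset.card_nsmul_le_sum h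

theorem Multiset.sum_tsub_add_sum {α : Type*} [AddCommMonoid α] [DecidableEq α]
    {s t : Multiset α} (h : t ≤ s) : (s - t).sum + t.sum = s.sum := by
  rw [← Multiset.sum_add, tsub_add_cancel_of_le h]

theorem mem_nfold_iff {α : Type*} [AddCommMonoid α] [DecidableEq α] {A : Finset α} {N : ℕ}
    {n : α} : n ∈ nfold A N ↔ ∃ m : Multiset α, card m = N ∧ (∀ x ∈ m, x ∈ A) ∧ m.sum = n := by
  induction N generalizing n with
  | zero => simp [nfold, eq_comm]
  | succ N ih =>
    simp only [nfold, Finset.mem_add, ih]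
    constructor
    · rintro ⟨_, ⟨m, rfl, hm, rfl⟩, x, hx, rfl⟩
      exact ⟨x ::ₘ m, by simp, by simpa [hx] using hm, by simp [add_comm]⟩
    · rintro ⟨m, hcard, hm, rfl⟩
      obtain ⟨x, t, rfl, rfl⟩ := Multiset.card_eq_succ_iff.1 hcard
      exact ⟨t.sum, ⟨t, rfl, fun y hy => hm y (by simp [hy]), rfl⟩, x, hm x (by simp),
        by simp [add_comm]⟩

/-- A representation of `n_{a,A}` by `N_{a,A}` elements of `A`, where `a` is the class of `m.sum`
mod `b` (see `exists_isMinimalRep`). -/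
structure IsMinimalRep (A : Finset ℤ) (b : ℤ) (m : Multiset ℤ) : Prop where
  mem : ∀ x ∈ m, x ∈ A
  sum_pos : 0 < m.sum
  sum_le : ∀ m' : Multiset ℤ, (∀ x ∈ m', x ∈ A) → 0 < m'.sum → m'.sum ≡ m.sum [ZMOD b] →
    m.sum ≤ m'.sum
  card_le : ∀ m' : Multiset ℤ, (∀ x ∈ m', x ∈ A) → m'.sum = m.sum → card m ≤ card m'

section Nstar

variable {A : Finset ℤ} {b r : ℤ}

theorem exists_isMinimalRep
    (hr : ∃ m : Multiset ℤ, (∀ x ∈ m, x ∈ A) ∧ 0 < m.sum ∧ m.sum ≡ r [ZMOD b]) :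
    ∃ m, IsMinimalRep A b m ∧ m.sum ≡ r [ZMOD b] ∧ card m = Nmin A b r := by
  obtain ⟨m₀, hm₀A, hm₀pos, hm₀r⟩ := hr
  have mem_postP : ∀ m : Multiset ℤ, (∀ x ∈ m, x ∈ A) → 0 < m.sum → m.sum ∈ postP A :=
    fun m hm hpos => ⟨card m, Multiset.card_pos.2 (by rintro rfl; simp at hpos),
      mem_nfold_iff.2 ⟨m, rfl, hm, rfl⟩⟩
  have hbdd : BddBelow {n : ℤ | 1 ≤ n ∧ n ∈ postP A ∧ n % b = r % b} := ⟨1, fun _ h => h.1⟩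
  have hn : nmin A b r ∈ {n : ℤ | 1 ≤ n ∧ n ∈ postP A ∧ n % b = r % b} :=
    Int.csInf_mem ⟨_, hm₀pos, mem_postP m₀ hm₀A hm₀pos, hm₀r⟩ hbdd
  obtain ⟨hn1, ⟨N, hN1, hnN⟩, hnr⟩ := hn
  obtain ⟨-, hN⟩ : 1 ≤ Nmin A b r ∧ nmin A b r ∈ nfold A (Nmin A b r) :=
    Nat.sInf_mem (s := {N | 1 ≤ N ∧ nmin A b r ∈ nfold A N}) ⟨N, hN1, hnN⟩
  obtain ⟨m, hcard, hmA, hsum⟩ := mem_nfold_iff.1 hN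
  refine ⟨m, ⟨hmA, by omega, fun m' hm'A hm'pos hm'm => ?_, fun m' hm'A hm'm => ?_⟩,
    hsum ▸ hnr, hcard⟩
  · exact hsum ▸ csInf_le hbdd ⟨hm'pos, mem_postP m' hm'A hm'pos, hm'm.trans (hsum ▸ hnr)⟩
  · rw [hcard]
    exact Nat.sInf_le ⟨Multiset.card_pos.2 (by rintro rfl; simp at hm'm; omega),
      mem_nfold_iff.2 ⟨m', rfl, hm'A, hm'm.trans hsum⟩⟩

/-- An empty class has `n_{a,A} = sInf ∅ = 0 ∈ 1A`. -/
theorem Nmin_le_one (h0 : 0 ∈ A)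
    (hr : ¬ ∃ m : Multiset ℤ, (∀ x ∈ m, x ∈ A) ∧ 0 < m.sum ∧ m.sum ≡ r [ZMOD b]) :
    Nmin A b r ≤ 1 := by
  have hempty : {n : ℤ | 1 ≤ n ∧ n ∈ postP A ∧ n % b = r % b} = ∅ := by
    refine Set.eq_empty_of_forall_notMem ?_
    rintro n ⟨hn1, ⟨N, -, hnN⟩, hnr⟩
    obtain ⟨m, -, hmA, rfl⟩ := mem_nfold_iff.1 hnN
    exact hr ⟨m, hmA, by omega, hnr⟩
  have hnmin : nmin A b r = 0 := by rw [nmin, hempty, Int.csInf_empty]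
  exact Nat.sInf_le ⟨le_rfl, hnmin ▸ mem_nfold_iff.2 ⟨{0}, rfl, by simpa using h0, rfl⟩⟩

theorem Nstar_le {K : ℤ} (h0 : 0 ∈ A) (hK : 1 ≤ K)
    (h : ∀ m, IsMinimalRep A b m → ¬ b ∣ m.sum → (card m : ℤ) ≤ K) : (Nstar A b : ℤ) ≤ K := by
  suffices Nstar A b ≤ K.toNat by omega
  refine Finset.sup_le fun r hr => ?_
  obtain ⟨hr1, hrb⟩ := Finset.mem_Icc.1 hr
  by_cases hex : ∃ m : Multiset ℤ, (∀ x ∈ m, x ∈ A) ∧ 0 < m.sum ∧ m.sum ≡ r [ZMOD b]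
  · obtain ⟨m, hm, hmr, hcard⟩ := exists_isMinimalRep hex
    have := h m hm (not_dvd_of_modEq hmr (by omega) (by omega))
    omega
  · have := Nmin_le_one h0 hex
    omega

theorem le_Nstar {K : ℤ} (hr1 : 1 ≤ r) (hrb : r ≤ b - 1)
    (hr : ∃ m : Multiset ℤ, (∀ x ∈ m, x ∈ A) ∧ 0 < m.sum ∧ m.sum ≡ r [ZMOD b])
    (h : ∀ m, IsMinimalRep A b m → m.sum ≡ r [ZMOD b] → K ≤ card m) : K ≤ Nstar A b := by
  obtain ⟨m, hm, hmr, hcard⟩ := exists_isMinimalRep hr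
  have : Nmin A b r ≤ Nstar A b :=
    Finset.le_sup (f := fun r => Nmin A b r) (Finset.mem_Icc.2 ⟨hr1, hrb⟩)
  have := h m hm hmr
  omega

end Nstar

def prefixResidues (b : ℤ) (L : List ℤ) : Finset ℤ :=
  (Icc 1 L.length).image fun i => (L.take i).sum % b

theorem mem_prefixResidues {b r : ℤ} {L : List ℤ} :
    r ∈ prefixResidues b L ↔ ∃ i, 1 ≤ i ∧ i ≤ L.length ∧ (L.take i).sum % b = r := by
  simp [prefixResidues, and_assoc]

namespace IsMinimalRep

variable {A : Finset ℤ} {b : ℤ} {m : Multiset ℤ} {L : List ℤ}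

theorem exchange (hm : IsMinimalRep A b m) {D E : Multiset ℤ} (hD : D ≤ m)
    (hE : ∀ x ∈ E, x ∈ A) (hmod : E.sum ≡ D.sum [ZMOD b]) (hpos : D.sum < m.sum + E.sum) :
    D.sum ≤ E.sum ∧ (D.sum = E.sum → card D ≤ card E) := by
  have hsum : (m - D + E).sum = m.sum - D.sum + E.sum := by
    rw [Multiset.sum_add, ← Multiset.sum_tsub_add_sum hD]
    ring
  have hmem : ∀ x ∈ m - D + E, x ∈ A := by
    intro x hx
    rcases Multiset.mem_add.1 hx with hx | hx
    · exact hm.mem x (Multiset.mem_of_le (Multiset.sub_le_self m D) hx)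
    · exact hE x hx
  have hmod' : (m - D + E).sum ≡ m.sum [ZMOD b] := by
    simpa [hsum] using hmod.add_left (m.sum - D.sum)
  have hle := hm.sum_le _ hmem (by omega) hmod'
  refine ⟨by omega, fun heq => ?_⟩
  have := hm.card_le _ hmem (by omega)
  rw [Multiset.card_add, Multiset.card_sub hD] at this
  have := Multiset.card_le_card hD
  omega

theorem pos_of_mem (hm : IsMinimalRep A b m) (hA : A ⊆ Icc 0 b) {x : ℤ} (hx : x ∈ m) :
    0 < x := by
  refine lt_of_le_of_ne (Finset.mem_Icc.1 (hA (hm.mem x hx))).1 fun hx0 => ?_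
  have := (hm.exchange (D := {0}) (E := 0) (by simpa [hx0] using hx) (by simp) (by simp)
    (by simpa using hm.sum_pos)).2 (by simp)
  simp at this

theorem lt_of_mem (hm : IsMinimalRep A b m) (hA : A ⊆ Icc 0 b) (hmb : ¬ b ∣ m.sum) {x : ℤ}
    (hx : x ∈ m) : x < b := by
  refine lt_of_le_of_ne (Finset.mem_Icc.1 (hA (hm.mem x hx))).2 fun hxb => ?_
  have hb : 0 < b := hxb ▸ hm.pos_of_mem hA hx
  have hsum : b ≤ m.sum :=
    hxb ▸ Multiset.single_le_sum (fun y hy => (hm.pos_of_mem hA hy).le) x hx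
  have hne : m.sum ≠ b := fun h => hmb (h ▸ dvd_rfl)
  have := (hm.exchange (D := {b}) (E := 0) (by simpa [hxb] using hx) (by simp)
    (by simpa using (Int.modEq_zero_iff_dvd.2 dvd_rfl).symm) (by simp; omega)).1
  simp at this
  omega

theorem not_dvd_sum (hm : IsMinimalRep A b m) (hA : A ⊆ Icc 0 b) {D : Multiset ℤ} (hD : D ≤ m)
    (hD0 : 0 < card D) (hDm : card D < card m) : ¬ b ∣ D.sum := fun hdvd => by
  have hpos : ∀ {s}, s ≤ m → ∀ x ∈ s, 1 ≤ x := fun hs x hx =>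
    hm.pos_of_mem hA (Multiset.mem_of_le hs hx)
  have hDsum := Multiset.card_le_sum_of_one_le (hpos hD)
  have hrest := Multiset.card_le_sum_of_one_le (hpos (Multiset.sub_le_self m D))
  rw [Multiset.card_sub hD] at hrest
  have := Multiset.sum_tsub_add_sum hD
  have := (hm.exchange hD (E := 0) (by simp) (Int.modEq_zero_iff_dvd.2 hdvd).symm
    (by simp; omega)).1
  simp at this
  omega

theorem not_modEq_of_two_le_card (hm : IsMinimalRep A b m) (hA : A ⊆ Icc 0 b)
    {D : Multiset ℤ} (hD : D ≤ m) (hD2 : 2 ≤ card D) {c : ℤ} (hc : c ∈ A) (hc0 : 0 < c)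
    (hcb : c < b) : ¬ D.sum ≡ c [ZMOD b] := fun hmod => by
  have hnonneg : ∀ {s}, s ≤ m → 0 ≤ s.sum := fun hs =>
    Multiset.sum_nonneg fun x hx => (hm.pos_of_mem hA (Multiset.mem_of_le hs hx)).le
  have := hnonneg (Multiset.sub_le_self m D)
  have := Multiset.sum_tsub_add_sum hD
  have hle := hm.exchange hD (E := {c}) (by simpa using hc) (by simpa using hmod.symm)
    (by simp; omega)
  simp only [Multiset.sum_singleton, Multiset.card_singleton] at hle
  have := hle.2 (hmod.eq_of_nonneg_of_lt (hnonneg hD) (by omega) hc0.le hcb)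
  omega

theorem sum_lt_of_one_mem (hm : IsMinimalRep A b m) (hb : 0 < b) (hmb : ¬ b ∣ m.sum)
    (h1 : 1 ∈ A) : m.sum < b := by
  have hr : 0 < m.sum % b := lt_of_le_of_ne (Int.emod_nonneg _ hb.ne')
    (fun h => hmb (Int.dvd_of_emod_eq_zero h.symm))
  have := hm.sum_le (replicate (m.sum % b).toNat 1)
    (fun x hx => Multiset.eq_of_mem_replicate hx ▸ h1) (by simp; omega)
    (by simpa [Int.toNat_of_nonneg hr.le] using Int.mod_modEq m.sum b)
  simp [Int.toNat_of_nonneg hr.le] at this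
  have := Int.emod_lt_of_pos m.sum hb
  omega

theorem two_le_card (hm : IsMinimalRep A b m) (hA : A ⊆ Icc 0 b) {r : ℤ}
    (hmr : m.sum ≡ r [ZMOD b]) (hr0 : 0 < r) (hrb : r < b) (hrA : r ∉ A) : 2 ≤ card m := by
  have hmb := not_dvd_of_modEq hmr hr0 hrb
  by_contra! h
  obtain h0 | h1 : card m = 0 ∨ card m = 1 := by omega
  · have := hm.sum_pos
    simp_all
  obtain ⟨c, rfl⟩ := Multiset.card_eq_one.1 h1
  have hc : c ∈ ({c} : Multiset ℤ) := Multiset.mem_singleton_self c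
  have hcb := hm.lt_of_mem hA hmb hc
  rw [Multiset.sum_singleton] at hmr
  exact hrA (hmr.eq_of_nonneg_of_lt (hm.pos_of_mem hA hc).le hcb hr0.le hrb ▸ hm.mem c hc)

theorem card_prefixResidues (hm : IsMinimalRep A b m) (hA : A ⊆ Icc 0 b)
    (hL : (L : Multiset ℤ) = m) : #(prefixResidues b L) = L.length := by
  have hlen : card m = L.length := by rw [← hL, Multiset.coe_card]
  have key : ∀ i j, 1 ≤ i → i < j → j ≤ L.length →
      (L.take i).sum % b ≠ (L.take j).sum % b := fun i j hi hij hj heq => by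
    set D := (L.drop i).take (j - i)
    have hsplit : (L.take j).sum = (L.take i).sum + D.sum := by
      rw [← List.sum_append, ← List.take_add, Nat.add_sub_cancel' hij.le]
    have hDlen : D.length = j - i := by
      simp only [D, List.length_take, List.length_drop]
      omega
    refine hm.not_dvd_sum hA
      (hL ▸ Multiset.coe_le.2 ((List.take_sublist _ _).trans (List.drop_sublist _ _)).subperm)
      (by rw [Multiset.coe_card, hDlen]; omega) (by rw [Multiset.coe_card, hDlen, hlen]; omega) ?_
    simpa [hsplit] using Int.ModEq.dvd heq
  rw [prefixResidues, Finset.card_image_of_injOn, Nat.card_Icc, Nat.add_sub_cancel]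
  intro i hi j hj hij
  simp only [Finset.coe_Icc, Set.mem_Icc] at hi hj
  by_contra hne
  rcases lt_or_gt_of_ne hne with h | h
  · exact key i j hi.1 h hj.2 hij
  · exact key j i hj.1 h hi.2 hij.symm

theorem prefixResidues_subset (hm : IsMinimalRep A b m) (hb : 0 < b) (hA : A ⊆ Icc 0 b)
    (hmb : ¬ b ∣ m.sum) (hL : (L : Multiset ℤ) = m) : prefixResidues b L ⊆ Ioo 0 b := by
  intro r hr
  obtain ⟨i, hi1, hiL, rfl⟩ := mem_prefixResidues.1 hr
  refine Finset.mem_Ioo.2 ⟨lt_of_le_of_ne (Int.emod_nonneg _ hb.ne') fun h => ?_,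
    Int.emod_lt_of_pos _ hb⟩
  have hdvd := Int.dvd_of_emod_eq_zero h.symm
  rcases hiL.lt_or_eq with hlt | rfl
  · have hlen : card m = L.length := by rw [← hL, Multiset.coe_card]
    have hi : (L.take i).length = i := List.length_take_of_le hlt.le
    exact hm.not_dvd_sum hA (hL ▸ Multiset.coe_le.2 (List.take_sublist _ _).subperm)
      (by rw [Multiset.coe_card, hi]; omega) (by rw [Multiset.coe_card, hi]; omega)
      (by simpa using hdvd)
  · rw [List.take_length, ← Multiset.sum_coe, hL] at hdvd
    exact hmb hdvd

theorem card_prefixResidues_inter_le (hm : IsMinimalRep A b m) (hb : 0 < b)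
    (hA : A ⊆ Icc 0 b) (hmb : ¬ b ∣ m.sum) (hL : (L : Multiset ℤ) = m) :
    #(prefixResidues b L ∩ A) ≤ 1 := by
  refine Finset.card_le_one_iff_subset_singleton.2 ⟨(L.take 1).sum % b, fun r hr => ?_⟩
  obtain ⟨hrP, hrA⟩ := Finset.mem_inter.1 hr
  obtain ⟨hr0, hrb⟩ := Finset.mem_Ioo.1 (hm.prefixResidues_subset hb hA hmb hL hrP)
  obtain ⟨i, hi1, hiL, rfl⟩ := mem_prefixResidues.1 hrP
  obtain rfl | hi2 := hi1.eq_or_lt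
  · exact Finset.mem_singleton_self _
  · exact absurd (Int.mod_modEq _ _).symm <| hm.not_modEq_of_two_le_card hA (D := L.take i)
      (hL ▸ Multiset.coe_le.2 (List.take_sublist i L).subperm) (by simp; omega) hrA hr0 hrb

theorem prefixResidues_union_subset (hm : IsMinimalRep A b m) (hb : 0 < b) (hA : A ⊆ Icc 0 b)
    (hmb : ¬ b ∣ m.sum) (hL : (L : Multiset ℤ) = m) : prefixResidues b L ∪ A ⊆ Icc 0 b :=
  Finset.union_subset ((hm.prefixResidues_subset hb hA hmb hL).trans Finset.Ioo_subset_Icc_self)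
    hA

theorem card_add_card_le_card_union (hm : IsMinimalRep A b m) (hb : 0 < b) (hA : A ⊆ Icc 0 b)
    (hmb : ¬ b ∣ m.sum) (hL : (L : Multiset ℤ) = m) :
    card m + #A ≤ #(prefixResidues b L ∪ A) + 1 := by
  have := Finset.card_union_add_card_inter (prefixResidues b L) A
  have := hm.card_prefixResidues_inter_le hb hA hmb hL
  rw [hm.card_prefixResidues hA hL, ← Multiset.coe_card, hL] at *
  omega

theorem card_add_card_le (hm : IsMinimalRep A b m) (hb : 0 < b) (hA : A ⊆ Icc 0 b)
    (hmb : ¬ b ∣ m.sum) : (card m : ℤ) + #A ≤ b + 2 := by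
  have hL := Multiset.coe_toList m
  have := hm.card_add_card_le_card_union hb hA hmb hL
  have := Finset.card_le_card (hm.prefixResidues_union_subset hb hA hmb hL)
  rw [Int.card_Icc] at this
  omega

theorem prefixResidues_union_eq (hm : IsMinimalRep A b m) (hb : 0 < b) (hA : A ⊆ Icc 0 b)
    (hmb : ¬ b ∣ m.sum) (hL : (L : Multiset ℤ) = m) (heq : (card m : ℤ) + #A = b + 2) :
    prefixResidues b L ∪ A = Icc 0 b := by
  refine Finset.eq_of_subset_of_card_le (hm.prefixResidues_union_subset hb hA hmb hL) ?_
  have := hm.card_add_card_le_card_union hb hA hmb hL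
  rw [Int.card_Icc]
  omega

/-- The residue of `z + x` must be a prefix residue of `z :: y :: x :: t`, and only the prefix
`z + y` can give it. -/
theorem eq_of_eq_cons (hm : IsMinimalRep A b m) (hb : 0 < b) (hA : A ⊆ Icc 0 b)
    (hmb : ¬ b ∣ m.sum) (heq : (card m : ℤ) + #A = b + 2) {x y z : ℤ} {t : Multiset ℤ}
    (h : m = x ::ₘ y ::ₘ z ::ₘ t) : x = y := by
  set L := z :: y :: x :: t.toList
  have hm' : m = z ::ₘ y ::ₘ x ::ₘ t := by
    rw [h, Multiset.cons_swap x y, Multiset.cons_swap x z, Multiset.cons_swap y z]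
  have hL : (L : Multiset ℤ) = m := by simp [L, hm', ← Multiset.cons_coe]
  have hmem : ∀ {w}, w ∈ L → 0 < w ∧ w < b ∧ w ∈ A := fun hw => by
    rw [← Multiset.mem_coe, hL] at hw
    exact ⟨hm.pos_of_mem hA hw, hm.lt_of_mem hA hmb hw, hm.mem _ hw⟩
  obtain ⟨hx0, hxb, hxA⟩ := hmem (w := x) (by simp [L])
  obtain ⟨hy0, hyb, -⟩ := hmem (w := y) (by simp [L])
  have hD : (z ::ₘ x ::ₘ 0 : Multiset ℤ) ≤ m :=
    hm' ▸ Multiset.cons_le_cons _ (Multiset.singleton_le.2 (by simp))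
  have hr : (z + x) % b ∈ Ioo 0 b := by
    refine Finset.mem_Ioo.2 ⟨lt_of_le_of_ne (Int.emod_nonneg _ hb.ne') fun h0 => ?_,
      Int.emod_lt_of_pos _ hb⟩
    exact hm.not_dvd_sum hA hD (by simp) (by simp [h])
      (by simpa using Int.dvd_of_emod_eq_zero h0.symm)
  obtain ⟨hr0, hrb⟩ := Finset.mem_Ioo.1 hr
  have hrA : (z + x) % b ∉ A := fun hrA => hm.not_modEq_of_two_le_card hA hD (by simp) hrA hr0
    hrb (by simpa using (Int.mod_modEq _ _).symm)
  have hrP : (z + x) % b ∈ prefixResidues b L := by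
    have := hm.prefixResidues_union_eq hb hA hmb hL heq ▸ Finset.Ioo_subset_Icc_self hr
    exact (Finset.mem_union.1 this).resolve_right hrA
  obtain ⟨_ | j, hj1, -, hjr⟩ := mem_prefixResidues.1 hrP
  · omega
  have hmod : ((y :: x :: t.toList).take j).sum ≡ x [ZMOD b] :=
    Int.ModEq.add_left_cancel' z <| by
      simp only [L, List.take_succ_cons, List.sum_cons] at hjr
      exact hjr
  match j, hmod with
  | 0, hmod => exact absurd (hmod.eq_of_nonneg_of_lt le_rfl hb hx0.le hxb) hx0.ne
  | 1, hmod =>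
    simp only [List.take_succ_cons, List.take_zero, List.sum_singleton] at hmod
    exact (hmod.eq_of_nonneg_of_lt hy0.le hyb hx0.le hxb).symm
  | j + 2, hmod =>
    refine (hm.not_modEq_of_two_le_card hA (hL ▸ Multiset.coe_le.2
      ((List.take_sublist (j + 2) _).trans (List.sublist_cons_self z _)).subperm) ?_ hxA hx0
      hxb (by rwa [Multiset.sum_coe])).elim
    simp [List.take_succ_cons]

theorem eq_replicate (hm : IsMinimalRep A b m) (hb : 0 < b) (hA : A ⊆ Icc 0 b)
    (hmb : ¬ b ∣ m.sum) (heq : (card m : ℤ) + #A = b + 2) (h3 : 3 ≤ card m) :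
    ∃ x, m = replicate (card m) x := by
  obtain ⟨x, hx⟩ := Multiset.card_pos_iff_exists_mem.1 (by omega : 0 < card m)
  refine ⟨x, Multiset.eq_replicate.2 ⟨rfl, fun y hy => ?_⟩⟩
  obtain ⟨t, rfl⟩ := Multiset.exists_cons_of_mem hx
  obtain rfl | hyt := Multiset.mem_cons.1 hy
  · rfl
  obtain ⟨t', rfl⟩ := Multiset.exists_cons_of_mem hyt
  obtain ⟨z, hz⟩ := Multiset.card_pos_iff_exists_mem.1 (by simp at h3; omega : 0 < card t')
  obtain ⟨s, rfl⟩ := Multiset.exists_cons_of_mem hz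
  exact hm.eq_of_eq_cons hb hA hmb heq (Multiset.cons_swap _ _ _)

variable {N : ℕ} {x : ℤ}

theorem exists_mul_modEq (hm : IsMinimalRep A b (replicate N x)) (hb : 0 < b)
    (hA : A ⊆ Icc 0 b) (hmb : ¬ b ∣ (replicate N x).sum) (heq : (N : ℤ) + #A = b + 2) {r : ℤ}
    (hr : r ∈ Icc 0 b) (hrA : r ∉ A) : ∃ k : ℕ, 1 ≤ k ∧ k ≤ N ∧ k * x ≡ r [ZMOD b] := by
  have hL : ((List.replicate N x : List ℤ) : Multiset ℤ) = replicate N x :=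
    Multiset.coe_replicate _ _
  rw [← hm.prefixResidues_union_eq hb hA hmb hL (by simpa using heq)] at hr
  obtain ⟨k, hk1, hkN, hkr⟩ := mem_prefixResidues.1 ((Finset.mem_union.1 hr).resolve_right hrA)
  simp only [List.length_replicate, List.take_replicate, List.sum_replicate] at hkN hkr
  refine ⟨k, hk1, hkN, ?_⟩
  rw [Int.ModEq, ← hkr, min_eq_left hkN, nsmul_eq_mul, Int.emod_emod_of_dvd _ dvd_rfl]

theorem eq_union_Icc_of_replicate_one (hm : IsMinimalRep A b (replicate N 1)) (hb : 0 < b)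
    (hA : A ⊆ Icc 0 b) (h0 : 0 ∈ A) (hbA : b ∈ A) (hmb : ¬ b ∣ (replicate N 1).sum)
    (heq : (N : ℤ) + #A = b + 2) : A = {0, 1} ∪ Icc ((N : ℤ) + 1) b := by
  have hN : 0 < N := by have := hm.sum_pos; simp at this; omega
  have h1 : (1 : ℤ) ∈ A := hm.mem 1 (Multiset.mem_replicate.2 ⟨hN.ne', rfl⟩)
  have hNb : (N : ℤ) < b := by simpa using hm.sum_lt_of_one_mem hb hmb h1
  ext c
  simp only [Finset.mem_union, Finset.mem_insert, Finset.mem_singleton, Finset.mem_Icc]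
  constructor
  · intro hc
    obtain ⟨hc0, hcb⟩ := Finset.mem_Icc.1 (hA hc)
    by_contra! hne
    refine hm.not_modEq_of_two_le_card hA (D := replicate c.toNat 1)
      ((Multiset.replicate_le_replicate 1).2 (by omega)) (by simp; omega) hc (by omega)
      (by omega) ?_
    simp [Int.toNat_of_nonneg hc0]
  · rintro ((rfl | rfl) | ⟨hc1, hcb⟩)
    · exact h0
    · exact h1
    obtain rfl | hcb := hcb.eq_or_lt
    · exact hbA
    by_contra hcA
    obtain ⟨k, hk1, hkN, hk⟩ := hm.exists_mul_modEq hb hA hmb heq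
      (Finset.mem_Icc.2 ⟨by omega, hcb.le⟩) hcA
    have := hk.eq_of_nonneg_of_lt (by omega) (by omega) (by omega) hcb
    omega

/-- With `1 ∈ A` the sum `N * x` is below `b`, so `2x + 1` and `x - 1` are not multiples of `x`
there and lie in `A`; they replace three copies of `x` by two summands. -/
theorem one_notMem_of_replicate (hm : IsMinimalRep A b (replicate N x)) (hb : 0 < b)
    (hA : A ⊆ Icc 0 b) (hmb : ¬ b ∣ (replicate N x).sum) (heq : (N : ℤ) + #A = b + 2)
    (hx : 2 ≤ x) (hN : 3 ≤ N) : 1 ∉ A := fun h1 => by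
  have hNx : N * x < b := by simpa using hm.sum_lt_of_one_mem hb hmb h1
  have h3x : 3 * x ≤ N * x := mul_le_mul_of_nonneg_right (by exact_mod_cast hN) (by omega)
  have hmul : ∀ {c : ℤ}, 0 ≤ c → c < b → c ∉ A → ∃ k : ℕ, 1 ≤ k ∧ k ≤ N ∧ k * x = c :=
    fun hc0 hcb hcA => by
      obtain ⟨k, hk1, hkN, hk⟩ := hm.exists_mul_modEq hb hA hmb heq
        (Finset.mem_Icc.2 ⟨hc0, hcb.le⟩) hcA
      have : k * x ≤ N * x := mul_le_mul_of_nonneg_right (by exact_mod_cast hkN) (by omega)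
      exact ⟨k, hk1, hkN, hk.eq_of_nonneg_of_lt (by positivity) (by omega) hc0 hcb⟩
  have h2x : 2 * x + 1 ∈ A := by
    by_contra hc
    obtain ⟨k, -, -, hk⟩ := hmul (by omega) (by omega) hc
    rcases le_or_gt k 2 with hk2 | hk2
    · have : (k : ℤ) * x ≤ 2 * x := mul_le_mul_of_nonneg_right (by exact_mod_cast hk2) (by omega)
      omega
    · have : 3 * x ≤ (k : ℤ) * x := mul_le_mul_of_nonneg_right (by exact_mod_cast hk2) (by omega)
      omega
  have hx1 : x - 1 ∈ A := by
    by_contra hc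
    obtain ⟨k, hk1, -, hk⟩ := hmul (by omega) (by omega) hc
    have : 1 * x ≤ (k : ℤ) * x := mul_le_mul_of_nonneg_right (by exact_mod_cast hk1) (by omega)
    omega
  have hsum : ({2 * x + 1, x - 1} : Multiset ℤ).sum = (replicate 3 x).sum := by simp; ring
  have := (hm.exchange ((Multiset.replicate_le_replicate x).2 hN) (by simp [h2x, hx1])
    (hsum ▸ Int.ModEq.refl _) (by simp; omega)).2 hsum.symm
  simp at this

/-- Without `1 ∈ A` the sum `N * x` exceeds `b`. An element `c ∈ A` strictly between `0` and `b`
cannot pair with `d = (N * x - c) % b ∈ A` (that would give `N ≤ 2`), so `d` is a multiple `j * x`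
and `c ≡ (N - j) * x`, which leaves only `c = x`. -/
theorem card_le_three_of_replicate (hm : IsMinimalRep A b (replicate N x)) (hb : 0 < b)
    (hA : A ⊆ Icc 0 b) (hmb : ¬ b ∣ (replicate N x).sum) (heq : (N : ℤ) + #A = b + 2)
    (hx : 2 ≤ x) (hN : 3 ≤ N) (h1 : 1 ∉ A) : #A ≤ 3 := by
  have hsum : (replicate N x).sum = N * x := by simp
  obtain ⟨k, hk1, hkN, hk⟩ := hm.exists_mul_modEq hb hA hmb heq
    (Finset.mem_Icc.2 ⟨zero_le_one, by omega⟩) h1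
  have hbN : b < N * x := by
    have : 1 * x ≤ (k : ℤ) * x := mul_le_mul_of_nonneg_right (by exact_mod_cast hk1) (by omega)
    have : (k : ℤ) * x ≤ N * x := mul_le_mul_of_nonneg_right (by exact_mod_cast hkN) (by omega)
    have := Int.le_of_dvd (by omega) (Int.ModEq.dvd hk.symm)
    omega
  suffices A ⊆ {0, x, b} from (Finset.card_le_card this).trans Finset.card_le_three
  intro c hc
  obtain ⟨hc0, hcb⟩ := Finset.mem_Icc.1 (hA hc)
  simp only [Finset.mem_insert, Finset.mem_singleton]
  rcases hc0.eq_or_lt with rfl | hc0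
  · exact Or.inl rfl
  rcases hcb.eq_or_lt with rfl | hcb
  · exact Or.inr (Or.inr rfl)
  refine Or.inr (Or.inl ?_)
  set d := (N * x - c) % b
  have hd0 : 0 ≤ d := Int.emod_nonneg _ hb.ne'
  have hdb : d < b := Int.emod_lt_of_pos _ hb
  have hd : d ≡ N * x - c [ZMOD b] := Int.mod_modEq _ _
  by_cases hdA : d ∈ A
  · have hcd : c + d ≡ N * x [ZMOD b] := by simpa using hd.add_left c
    have hle := hm.sum_le {c, d} (by simp [hc, hdA]) (by simp; omega) (by simpa [hsum] using hcd)
    simp only [hsum, Multiset.insert_eq_cons, Multiset.sum_cons, Multiset.sum_singleton] at hle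
    have : c + d - N * x = 0 := Int.eq_zero_of_dvd_of_nonneg_of_lt (by omega) (by omega)
      (Int.ModEq.dvd hcd.symm)
    have := hm.card_le {c, d} (by simp [hc, hdA]) (by simp; omega)
    simp at this
    omega
  obtain ⟨j, hj1, hjN, hj⟩ :=
    hm.exists_mul_modEq hb hA hmb heq (Finset.mem_Icc.2 ⟨hd0, hdb.le⟩) hdA
  have hcj : ((N - j : ℕ) : ℤ) * x ≡ c [ZMOD b] := by
    have := Int.ModEq.dvd (hj.trans hd)
    rw [Int.modEq_iff_dvd, Nat.cast_sub hjN,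
      show c - ((N : ℤ) - j) * x = -(N * x - c - j * x) by ring]
    exact dvd_neg.2 this
  obtain h | h | h : N - j = 0 ∨ N - j = 1 ∨ 2 ≤ N - j := by omega
  · rw [h] at hcj
    exact absurd (hcj.eq_of_nonneg_of_lt (by simp) (by simpa) hc0.le hcb) (by simp; omega)
  · have hxb : x < b := hm.lt_of_mem hA hmb (Multiset.mem_replicate.2 ⟨by omega, rfl⟩)
    rw [h, Nat.cast_one, one_mul] at hcj
    exact (hcj.eq_of_nonneg_of_lt (by omega) hxb hc0.le hcb).symm
  · exact absurd (by simpa using hcj) <| hm.not_modEq_of_two_le_card hA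
      (D := replicate (N - j) x) ((Multiset.replicate_le_replicate x).2 (by omega)) (by simpa)
      hc hc0 hcb

theorem eq_union_Icc (hm : IsMinimalRep A b m) (hb : 0 < b)
    (hA : A ⊆ Icc 0 b) (h0 : 0 ∈ A) (hbA : b ∈ A) (hmb : ¬ b ∣ m.sum) (hA4 : 4 ≤ #A)
    (heq : (card m : ℤ) + #A = b + 2) (h3 : 3 ≤ card m) :
    A = {0, 1} ∪ Icc ((card m : ℤ) + 1) b := by
  obtain ⟨x, hx⟩ := hm.eq_replicate hb hA hmb heq h3
  generalize card m = N at hx heq h3 ⊢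
  subst hx
  have hx1 : 1 ≤ x := hm.pos_of_mem hA (Multiset.mem_replicate.2 ⟨by omega, rfl⟩)
  obtain rfl | hx2 := hx1.eq_or_lt
  · exact hm.eq_union_Icc_of_replicate_one hb hA h0 hbA hmb heq
  have h1 := hm.one_notMem_of_replicate hb hA hmb heq hx2 h3
  have := hm.card_le_three_of_replicate hb hA hmb heq hx2 h3 h1
  omega

end IsMinimalRep

theorem le_Nstar_union_Icc {a b : ℤ} (ha : 1 ≤ a) (hab : a ≤ b - 1) :
    a ≤ Nstar ({0, 1} ∪ Icc (a + 1) b) b := by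
  set A : Finset ℤ := {0, 1} ∪ Icc (a + 1) b
  have hmemA : ∀ {x}, x ∈ A ↔ x = 0 ∨ x = 1 ∨ a + 1 ≤ x ∧ x ≤ b := by simp [A]
  have hones : ∀ x ∈ replicate a.toNat (1 : ℤ), x ∈ A :=
    fun x hx => hmemA.2 (Or.inr (Or.inl (Multiset.eq_of_mem_replicate hx)))
  have hsum : (replicate a.toNat (1 : ℤ)).sum = a := by simp; omega
  refine le_Nstar ha hab ⟨_, hones, by rw [hsum]; omega, by rw [hsum]⟩ fun m hm hmr => ?_
  have hnonneg : ∀ x ∈ m, 0 ≤ x := fun x hx => by have := hmemA.1 (hm.mem x hx); omega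
  have hle := hm.sum_le _ hones (by rw [hsum]; omega) (by rw [hsum]; exact hmr.symm)
  rw [hsum] at hle
  have hma : m.sum = a := hmr.eq_of_nonneg_of_lt hm.sum_pos.le (by omega) (by omega) (by omega)
  have hone : ∀ x ∈ m, x ≤ 1 := fun x hx => by
    have := Multiset.single_le_sum hnonneg x hx
    have := hmemA.1 (hm.mem x hx)
    omega
  simpa [hma] using Multiset.sum_le_card_nsmul m 1 hone

theorem two_le_Nstar_Icc_sdiff {a b : ℤ} (hb : 3 ≤ b) (ha : 1 ≤ a) (hab : a ≤ b - 1) :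
    2 ≤ Nstar (Icc 0 b \ {a}) b := by
  have hmemA : ∀ {x}, x ∈ Icc 0 b \ {a} ↔ 0 ≤ x ∧ x ≤ b ∧ x ≠ a := by simp [and_assoc]
  have hwit : ∃ m : Multiset ℤ, (∀ x ∈ m, x ∈ Icc 0 b \ {a}) ∧ 0 < m.sum ∧ m.sum ≡ a [ZMOD b] := by
    obtain rfl | ha := ha.eq_or_lt
    · refine ⟨{2, b - 1}, by simp [hmemA]; omega, by simp; omega, ?_⟩
      exact Int.modEq_iff_dvd.2 ⟨-1, by simp; ring⟩
    · exact ⟨{1, a - 1}, by simp [hmemA]; omega, by simp; omega, by simp⟩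
  have : (2 : ℤ) ≤ Nstar (Icc 0 b \ {a}) b := le_Nstar ha hab hwit fun m hm hmr => by
    exact_mod_cast hm.two_le_card (by simp) hmr (by omega) (by omega) (by simp)
  exact_mod_cast this

theorem exists_eq_Icc_sdiff_singleton {A : Finset ℤ} {b : ℤ} (hA : A ⊆ Icc 0 b) (h0 : 0 ∈ A)
    (hbA : b ∈ A) (hcard : (#A : ℤ) = b) : ∃ a, 1 ≤ a ∧ a ≤ b - 1 ∧ A = Icc 0 b \ {a} := by
  obtain ⟨a, ha⟩ : ∃ a, Icc 0 b \ A = {a} := by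
    refine Finset.card_eq_one.1 ?_
    rw [Finset.card_sdiff_of_subset hA, Int.card_Icc]
    omega
  obtain ⟨⟨ha0, hab⟩, haA⟩ :=
    (Finset.mem_sdiff.1 (ha ▸ Finset.mem_singleton_self a)).imp_left Finset.mem_Icc.1
  refine ⟨a, ?_, ?_, by rw [← ha, Finset.sdiff_sdiff_eq_self hA]⟩
  · rcases ha0.eq_or_lt with rfl | h
    · exact absurd h0 haA
    · omega
  · rcases hab.eq_or_lt with rfl | h
    · exact absurd hbA haA
    · omega

theorem stmt9_general (A : Finset ℤ) (b : ℤ) (ℓ : ℕ)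
    (hcard : A.card = ℓ + 2) (hℓ2 : 2 ≤ ℓ) (hℓb : (ℓ : ℤ) ≤ b - 2)
    (h0 : 0 ∈ A) (hb : b ∈ A)
    (hmin : ∀ a ∈ A, 0 ≤ a) (hmax : ∀ a ∈ A, a ≤ b) :
    (Nstar A b : ℤ) ≤ b - (ℓ : ℤ) - 1 ∨
    (∃ a : ℤ, 1 ≤ a ∧ a ≤ b - 1 ∧ A = Finset.Icc 0 b \ {a} ∧
      Nstar A b = 2 ∧ b - (ℓ : ℤ) = 2) ∨
    (∃ a : ℤ, 2 ≤ a ∧ a ≤ b - 2 ∧ A = {0, 1} ∪ Finset.Icc (a + 1) b ∧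
      (Nstar A b : ℤ) = b - (ℓ : ℤ)) := by
  have hA : A ⊆ Icc 0 b := fun x hx => Finset.mem_Icc.2 ⟨hmin x hx, hmax x hx⟩
  have hb0 : 0 < b := by omega
  have hcardA : (#A : ℤ) = ℓ + 2 := by exact_mod_cast hcard
  have hupper : (Nstar A b : ℤ) ≤ b - ℓ := Nstar_le h0 (by omega) fun m hm hmb => by
    have := hm.card_add_card_le hb0 hA hmb
    omega
  by_cases h3 : A = {0, 1} ∪ Icc (b - ℓ + 1) b
  · refine Or.inr (Or.inr ⟨b - ℓ, by omega, by omega, h3, le_antisymm hupper ?_⟩)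
    exact h3 ▸ le_Nstar_union_Icc (by omega) (by omega)
  by_cases h2 : (ℓ : ℤ) = b - 2
  · obtain ⟨a, ha1, hab, rfl⟩ := exists_eq_Icc_sdiff_singleton hA h0 hb (by omega)
    have := two_le_Nstar_Icc_sdiff (by omega) ha1 hab
    exact Or.inr (Or.inl ⟨a, ha1, hab, rfl, by omega, by omega⟩)
  refine Or.inl (Nstar_le h0 (by omega) fun m hm hmb => ?_)
  have := hm.card_add_card_le hb0 hA hmb
  by_contra! hlt
  refine h3 ?_
  convert hm.eq_union_Icc hb0 hA h0 hb hmb (by omega) (by omega) (by omega) using 3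
  omega

theorem stmt9 (A : Finset ℤ) (b : ℤ) (ℓ : ℕ)
    (hcard : A.card = ℓ + 2) (hℓ2 : 2 ≤ ℓ) (hℓb : (ℓ : ℤ) ≤ b - 2)
    (h0 : 0 ∈ A) (hb : b ∈ A)
    (hmin : ∀ a ∈ A, 0 ≤ a) (hmax : ∀ a ∈ A, a ≤ b)
    (hgcd : A.gcd id = 1) :
    (Nstar A b : ℤ) ≤ b - (ℓ : ℤ) - 1 ∨
    (∃ a : ℤ, 1 ≤ a ∧ a ≤ b - 1 ∧ A = Finset.Icc 0 b \ {a} ∧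
      Nstar A b = 2 ∧ b - (ℓ : ℤ) = 2) ∨
    (∃ a : ℤ, 2 ≤ a ∧ a ≤ b - 2 ∧ A = {0, 1} ∪ Finset.Icc (a + 1) b ∧
      (Nstar A b : ℤ) = b - (ℓ : ℤ)) :=
  stmt9_general A b ℓ hcard hℓ2 hℓb h0 hb hmin hmax
end

section
/- Let A = {0,1} ∪ {a+1, a+2, ..., b} for integers a, b with 2 ≤ a ≤ b−2. Then E(A) = ∅ and E(b−A) = ∅, while a ∉ (a−1)A; consequently the equality NA = {0,1,...,bN} \ (E(A) ∪ (bN − E(b−A))) fails for N = a − 1 = b − ℓ − 1, where ℓ = |A| − 2. -/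
open Pointwise

lemma nat_mem_nfold {A : Finset ℤ} (h1 : (1:ℤ) ∈ A) : ∀ N : ℕ, (N : ℤ) ∈ nfold A N
  | 0 => by simp [nfold]
  | N + 1 => by
    have := nat_mem_nfold h1 N
    have h2 := Finset.add_mem_add this h1
    simpa [nfold, Nat.cast_succ] using h2

lemma postE_empty {A : Finset ℤ} (h1 : (1:ℤ) ∈ A) : postE A = ∅ := by
  ext n
  simp only [postE, postP, Set.mem_setOf_eq, Set.mem_empty_iff_false, iff_false, not_and,
    not_not]
  intro hn
  refine ⟨n.toNat, by omega, ?_⟩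
  have := nat_mem_nfold h1 n.toNat
  rwa [Int.toNat_of_nonneg (by omega)] at this

theorem stmt12 (a b : ℕ) (ha : 2 ≤ a) (hab : a + 2 ≤ b)
    (A : Finset ℤ) (hA : A = {0, 1} ∪ Finset.Icc ((a : ℤ) + 1) (b : ℤ)) :
    postE A = ∅ ∧
    postE (A.image (fun x => (b : ℤ) - x)) = ∅ ∧
    (a : ℤ) ∉ nfold A (a - 1) ∧
    ((a : ℤ) - 1 = (b : ℤ) - ((A.card : ℤ) - 2) - 1) ∧
    (↑(nfold A (a - 1)) : Set ℤ) ≠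
      Set.Icc 0 ((b : ℤ) * ((a - 1 : ℕ) : ℤ)) \
        (postE A ∪ (fun m => (b : ℤ) * ((a - 1 : ℕ) : ℤ) - m) ''
          postE (A.image (fun x => (b : ℤ) - x))) := by
  have h1A : (1:ℤ) ∈ A := by
    rw [hA]; simp
  have h1B : (1:ℤ) ∈ A.image (fun x => (b : ℤ) - x) := by
    refine Finset.mem_image.2 ⟨(b:ℤ) - 1, ?_, by ring⟩
    rw [hA]
    refine Finset.mem_union_right _ (Finset.mem_Icc.2 ⟨?_, ?_⟩) <;> omega
  have hEA : postE A = ∅ := postE_empty h1A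
  have hEB : postE (A.image (fun x => (b : ℤ) - x)) = ∅ := postE_empty h1B
  -- structure lemma
  have hstruct : ∀ N : ℕ, ∀ x ∈ nfold A N, 0 ≤ x ∧ (x ≤ (N:ℤ) ∨ (a:ℤ) + 1 ≤ x) := by
    intro N
    induction N with
    | zero => intro x hx; simp [nfold] at hx; omega
    | succ n ih =>
      intro x hx
      rw [nfold, Finset.mem_add] at hx
      obtain ⟨y, hy, z, hz, rfl⟩ := hx
      obtain ⟨hy0, hy1⟩ := ih y hy
      rw [hA, Finset.mem_union] at hz
      rcases hz with hz | hz
      · simp only [Finset.mem_insert, Finset.mem_singleton] at hz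
        push_cast
        rcases hz with rfl | rfl <;> omega
      · rw [Finset.mem_Icc] at hz
        push_cast
        omega
  have hnotmem : (a : ℤ) ∉ nfold A (a - 1) := by
    intro h
    have := hstruct (a - 1) _ h
    have : ((a - 1 : ℕ) : ℤ) = (a:ℤ) - 1 := by push_cast [Nat.cast_sub (by omega : 1 ≤ a)]; ring
    omega
  have hcard : ((A.card : ℤ) - 2) = (b:ℤ) - a := by
    have hdisj : Disjoint ({0, 1} : Finset ℤ) (Finset.Icc ((a : ℤ) + 1) (b : ℤ)) := by
      rw [Finset.disjoint_left]
      intro x hx hx2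
      simp only [Finset.mem_insert, Finset.mem_singleton] at hx
      rw [Finset.mem_Icc] at hx2
      rcases hx with rfl | rfl <;> omega
    rw [hA, Finset.card_union_of_disjoint hdisj]
    rw [Int.card_Icc]
    have h2 : ({0, 1} : Finset ℤ).card = 2 := by decide
    rw [h2]
    have : ((b:ℤ) + 1 - ((a:ℤ) + 1)).toNat = b - a := by omega
    rw [this]
    push_cast
    omega
  refine ⟨hEA, hEB, hnotmem, by omega, ?_⟩
  intro heq
  apply hnotmem
  have : (a : ℤ) ∈ (↑(nfold A (a-1)) : Set ℤ) := by
    rw [heq, hEA, hEB]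
    simp only [Set.image_empty, Set.union_empty, Set.diff_empty, Set.mem_Icc]
    constructor
    · positivity
    · have hcast : ((a - 1 : ℕ) : ℤ) = (a:ℤ) - 1 := by omega
      rw [hcast]
      nlinarith [ha, hab, (by exact_mod_cast ha : (2:ℤ) ≤ a), (by exact_mod_cast hab : (a:ℤ) + 2 ≤ b)]
  exact_mod_cast this
end

section
/- Let A = {0, h, b−h, b} with 0 < h < b−h < b and gcd(h, b) = 1. Then for every k with 1 ≤ k ≤ b−1: if 1 ≤ k < b−h then n_{kh mod b, A} = kh and N_{kh mod b, A} = k, while if b−h ≤ k ≤ b−1 then n_{kh mod b, A} = (b−k)(b−h) and N_{kh mod b, A} = b−k. -/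
open Pointwise

lemma mem_nfold_step {A : Finset ℤ} {N : ℕ} {p q : ℤ} (hp : p ∈ nfold A N) (hq : q ∈ A) :
    p + q ∈ nfold A (N + 1) := by
  show p + q ∈ nfold A N + A
  exact Finset.add_mem_add hp hq

lemma nfold_mono {A : Finset ℤ} (h0 : (0:ℤ) ∈ A) {N M : ℕ} (hNM : N ≤ M) :
    nfold A N ⊆ nfold A M := by
  induction M with
  | zero => simpa [Nat.le_zero.mp hNM] using Finset.Subset.refl _
  | succ M ih =>
    rcases Nat.lt_or_ge N (M+1) with hlt | hge
    · intro x hx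
      have hx' := ih (Nat.lt_succ_iff.mp hlt) hx
      have := mem_nfold_step hx' h0
      simpa using this
    · have : N = M + 1 := le_antisymm hNM hge
      subst this; exact Finset.Subset.refl _

lemma repr_mem {h b : ℤ} {A : Finset ℤ} (hA : A = {0, h, b - h, b}) (y z w : ℕ) :
    ((y:ℤ) * h + z * (b - h) + w * b) ∈ nfold A (y + z + w) := by
  have h0 : (0:ℤ) ∈ A := by rw [hA]; simp
  have hh : h ∈ A := by rw [hA]; simp
  have hbh : b - h ∈ A := by rw [hA]; simp
  have hbb : b ∈ A := by rw [hA]; simp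
  induction w with
  | zero =>
    induction z with
    | zero =>
      induction y with
      | zero => simp [nfold]
      | succ y ihy =>
        have := mem_nfold_step ihy hh
        have e2 : y + 1 + 0 + 0 = y + 0 + 0 + 1 := by omega
        rw [e2]
        convert this using 1
        push_cast; ring
    | succ z ihz =>
      have := mem_nfold_step ihz hbh
      have e2 : y + (z + 1) + 0 = y + z + 0 + 1 := by omega
      rw [e2]
      convert this using 1
      push_cast; ring
  | succ w ihw =>
    have := mem_nfold_step ihw hbb
    have e2 : y + z + (w + 1) = y + z + w + 1 := by omega
    rw [e2]
    convert this using 1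
    push_cast; ring

lemma mem_nfold_iff_s17 {h b : ℤ} {A : Finset ℤ} (hA : A = {0, h, b - h, b}) (N : ℕ) (n : ℤ) :
    n ∈ nfold A N ↔ ∃ y z w : ℕ, y + z + w ≤ N ∧ n = y * h + z * (b - h) + w * b := by
  have h0 : (0:ℤ) ∈ A := by rw [hA]; simp
  constructor
  · induction N generalizing n with
    | zero =>
      intro hn
      simp only [nfold, Finset.mem_singleton] at hn
      exact ⟨0, 0, 0, le_refl _, by simp [hn]⟩
    | succ N ih =>
      intro hn
      rw [show nfold A (N+1) = nfold A N + A from rfl, Finset.mem_add] at hn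
      obtain ⟨p, hp, q, hq, rfl⟩ := hn
      obtain ⟨y, z, w, hle, rfl⟩ := ih p hp
      rw [hA] at hq
      simp only [Finset.mem_insert, Finset.mem_singleton] at hq
      rcases hq with rfl | rfl | rfl | rfl
      · exact ⟨y, z, w, by omega, by ring⟩
      · exact ⟨y + 1, z, w, by omega, by push_cast; ring⟩
      · exact ⟨y, z + 1, w, by omega, by push_cast; ring⟩
      · exact ⟨y, z, w + 1, by omega, by push_cast; ring⟩
  · rintro ⟨y, z, w, hle, rfl⟩
    exact nfold_mono h0 hle (repr_mem hA y z w)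

lemma coprime_cancel (h b x : ℤ) (hgcd : Int.gcd h b = 1) (hdvd : b ∣ x * h) : b ∣ x := by
  have hco : IsCoprime b h := by
    rw [Int.isCoprime_iff_gcd_eq_one, Int.gcd_comm]; exact_mod_cast hgcd
  exact hco.dvd_of_dvd_mul_right hdvd

lemma lower_n (h b k : ℤ) (h1 : 0 < h) (h2 : h < b - h) (hgcd : Int.gcd h b = 1)
    (hk1 : 1 ≤ k) (hk2 : k ≤ b - 1) (y z w : ℕ) (n : ℤ)
    (hn : n = y * h + z * (b - h) + w * b) (hmod : n % b = k * h % b) :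
    k * h ≤ n ∨ (b - k) * (b - h) ≤ n := by
  have hb : 0 < b := by linarith
  have hd1 : b ∣ k * h - n := Int.ModEq.dvd hmod
  have hd2 : b ∣ n - ((y:ℤ) - z) * h := ⟨(z:ℤ) + w, by rw [hn]; push_cast; ring⟩
  have hd3 : b ∣ (k - ((y:ℤ) - z)) * h := by
    have := dvd_add hd1 hd2
    have e : k * h - n + (n - ((y:ℤ) - z) * h) = (k - ((y:ℤ) - z)) * h := by ring
    rwa [e] at this
  obtain ⟨j, hj⟩ := coprime_cancel h b _ hgcd hd3
  have hz0 : (0:ℤ) ≤ z := by positivity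
  have hw0 : (0:ℤ) ≤ w := by positivity
  have hy0 : (0:ℤ) ≤ y := by positivity
  rcases le_or_gt j 0 with hjle | hjgt
  · left
    nlinarith [mul_nonneg (mul_nonneg hb.le (neg_nonneg.mpr hjle)) h1.le,
      mul_nonneg (add_nonneg hz0 hw0) hb.le]
  · right
    have hj1 : 1 ≤ j := hjgt
    have hbj : b ≤ b * j := le_mul_of_one_le_right hb.le hj1
    -- d = (y:ℤ) - z = k - b*j, so -d ≥ b - k
    have hd : (y:ℤ) - z = k - b * j := by linarith
    have hnd : b - k ≤ -((y:ℤ) - z) := by linarith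
    have hm : -((y:ℤ) - z) ≤ (z:ℤ) + w := by linarith
    nlinarith [mul_nonneg (show (0:ℤ) ≤ ((z:ℤ) + w) + ((y:ℤ) - z) by linarith) hb.le,
      mul_nonneg (show (0:ℤ) ≤ -((y:ℤ) - z) - (b - k) by linarith) (show (0:ℤ) ≤ b - h by linarith)]

lemma Nlower1 (h b k : ℤ) (h1 : 0 < h) (h2 : h < b - h) (hgcd : Int.gcd h b = 1)
    (hk1 : 1 ≤ k) (hklt : k < b - h) (y z w : ℕ)
    (heq : k * h = y * h + z * (b - h) + w * b) :
    k ≤ (y:ℤ) + z + w := by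
  have hb : 0 < b := by linarith
  have hd3 : b ∣ (k - ((y:ℤ) - z)) * h := ⟨(z:ℤ) + w, by linear_combination heq⟩
  obtain ⟨j, hj⟩ := coprime_cancel h b _ hgcd hd3
  have hm : ((z:ℤ) + w) * b = (j * h) * b := by linear_combination h * hj - heq
  have hm' : ((z:ℤ) + w) = j * h := mul_right_cancel₀ (by positivity) hm
  have hz0 : (0:ℤ) ≤ z := by positivity
  have hw0 : (0:ℤ) ≤ w := by positivity
  have hy0 : (0:ℤ) ≤ y := by positivity
  rcases lt_trichotomy j 0 with hjn | hj0 | hjp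
  · exfalso
    have : (1:ℤ) ≤ -j := by linarith
    nlinarith
  · subst hj0
    have hz : (z:ℤ) = 0 := by linarith
    have hw : (w:ℤ) = 0 := by linarith
    have : (y:ℤ) = k := by linarith [hj]
    linarith
  · exfalso
    have hj1 : (1:ℤ) ≤ j := hjp
    -- z ≥ -d = b*j - k and z ≤ j*h
    have hzge : b * j - k ≤ (z:ℤ) := by linarith [hj]
    have hzle : (z:ℤ) ≤ j * h := by linarith
    nlinarith [mul_nonneg (show (0:ℤ) ≤ j - 1 by linarith) (show (0:ℤ) ≤ b - h by linarith)]

lemma Nlower2 (h b k : ℤ) (h1 : 0 < h) (h2 : h < b - h) (hgcd : Int.gcd h b = 1)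
    (hk2 : k ≤ b - 1) (hkge : b - h ≤ k) (y z w : ℕ)
    (heq : (b - k) * (b - h) = y * h + z * (b - h) + w * b) :
    b - k ≤ (y:ℤ) + z + w := by
  have hb : 0 < b := by linarith
  have hd3 : b ∣ (((y:ℤ) - z) + (b - k)) * h := ⟨(b - k) - ((z:ℤ) + w), by linear_combination -heq⟩
  obtain ⟨j, hj⟩ := coprime_cancel h b _ hgcd hd3
  have hm : ((b - k) - ((z:ℤ) + w)) * b = (j * h) * b := by linear_combination heq + h * hj
  have hm' : (b - k) - ((z:ℤ) + w) = j * h := mul_right_cancel₀ (by positivity) hm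
  have hz0 : (0:ℤ) ≤ z := by positivity
  have hw0 : (0:ℤ) ≤ w := by positivity
  have hy0 : (0:ℤ) ≤ y := by positivity
  rcases lt_trichotomy j 0 with hjn | hj0 | hjp
  · exfalso
    have hj1 : (1:ℤ) ≤ -j := by linarith
    -- z ≥ -d = (b-k) - b*j and z ≤ m = (b-k) - j*h
    have hzge : (b - k) - b * j ≤ (z:ℤ) := by linarith [hj]
    have hzle : (z:ℤ) ≤ (b - k) - j * h := by linarith
    nlinarith [mul_nonneg (by linarith : (0:ℤ) ≤ -j) (show (0:ℤ) ≤ b - h by linarith)]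
  · subst hj0
    -- d = -(b-k), z ≥ b-k
    have : (b - k) ≤ (z:ℤ) := by linarith [hj]
    linarith
  · have hj1 : (1:ℤ) ≤ j := hjp
    -- y+z+w = j*(b-h) + z ≥ b-h > h ≥ b-k
    have hyv : (y:ℤ) = b * j - (b - k) + z := by linarith [hj]
    have hmw : (w:ℤ) = (b - k) - j * h - z := by linarith
    nlinarith [mul_nonneg (show (0:ℤ) ≤ j - 1 by linarith) (show (0:ℤ) ≤ b - h by linarith)]

theorem stmt17 (h b : ℤ) (h1 : 0 < h) (h2 : h < b - h) (h3 : b - h < b)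
    (hgcd : Int.gcd h b = 1)
    (A : Finset ℤ) (hA : A = {0, h, b - h, b})
    (k : ℤ) (hk1 : 1 ≤ k) (hk2 : k ≤ b - 1) :
    (k < b - h →
      nmin A b (k * h % b) = k * h ∧ (Nmin A b (k * h % b) : ℤ) = k) ∧
    (b - h ≤ k →
      nmin A b (k * h % b) = (b - k) * (b - h) ∧ (Nmin A b (k * h % b) : ℤ) = b - k) := by
  have hb : 0 < b := by linarith
  have hmm : k * h % b % b = k * h % b := Int.emod_emod_of_dvd _ dvd_rfl
  constructor
  · -- Case 1: k < b - h
    intro hlt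
    have hkh1 : 1 ≤ k * h := by nlinarith
    have hkt : 1 ≤ k.toNat := by omega
    have hmemN : k * h ∈ nfold A k.toNat := by
      rw [mem_nfold_iff_s17 hA]
      exact ⟨k.toNat, 0, 0, by omega,
        by push_cast [Int.toNat_of_nonneg (by linarith : (0:ℤ) ≤ k)]; ring⟩
    have hmemS : k * h ∈ {n : ℤ | 1 ≤ n ∧ n ∈ postP A ∧ n % b = k * h % b % b} :=
      ⟨hkh1, ⟨k.toNat, hkt, hmemN⟩, hmm.symm⟩
    have hlb : ∀ x ∈ {n : ℤ | 1 ≤ n ∧ n ∈ postP A ∧ n % b = k * h % b % b}, k * h ≤ x := by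
      rintro x ⟨hx1, ⟨N, hN1, hxN⟩, hxmod⟩
      obtain ⟨y, z, w, hle, rfl⟩ := (mem_nfold_iff_s17 hA N x).mp hxN
      rcases lower_n h b k h1 h2 hgcd hk1 hk2 y z w _ rfl (hxmod.trans hmm) with hc | hc
      · exact hc
      · nlinarith
    have hnmin : nmin A b (k * h % b) = k * h := by
      unfold nmin
      exact le_antisymm (csInf_le ⟨k * h, fun x hx => hlb x hx⟩ hmemS)
        (le_csInf ⟨_, hmemS⟩ hlb)
    refine ⟨hnmin, ?_⟩
    have hNset : {N : ℕ | 1 ≤ N ∧ nmin A b (k * h % b) ∈ nfold A N}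
        = {N : ℕ | 1 ≤ N ∧ k * h ∈ nfold A N} := by rw [hnmin]
    have hmemN' : k.toNat ∈ {N : ℕ | 1 ≤ N ∧ k * h ∈ nfold A N} := ⟨hkt, hmemN⟩
    have hlbN : ∀ N ∈ {N : ℕ | 1 ≤ N ∧ k * h ∈ nfold A N}, k.toNat ≤ N := by
      rintro N ⟨hN1, hNm⟩
      obtain ⟨y, z, w, hle, heq⟩ := (mem_nfold_iff_s17 hA N _).mp hNm
      have := Nlower1 h b k h1 h2 hgcd hk1 hlt y z w heq
      omega
    have hNv : Nmin A b (k * h % b) = k.toNat := by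
      unfold Nmin
      rw [hNset]
      exact le_antisymm (Nat.sInf_le hmemN') (hlbN _ (Nat.sInf_mem ⟨_, hmemN'⟩))
    rw [hNv]
    omega
  · -- Case 2: b - h ≤ k
    intro hge
    have ht1 : 1 ≤ (b - k) * (b - h) := by nlinarith
    have hkt : 1 ≤ (b - k).toNat := by omega
    have hmod2 : (b - k) * (b - h) % b = k * h % b :=
      Int.modEq_iff_dvd.mpr ⟨h + k - b, by ring⟩
    have hmemN : (b - k) * (b - h) ∈ nfold A (b - k).toNat := by
      rw [mem_nfold_iff_s17 hA]
      exact ⟨0, (b - k).toNat, 0, by omega,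
        by push_cast [Int.toNat_of_nonneg (by linarith : (0:ℤ) ≤ b - k)]; ring⟩
    have hmemS : (b - k) * (b - h) ∈ {n : ℤ | 1 ≤ n ∧ n ∈ postP A ∧ n % b = k * h % b % b} :=
      ⟨ht1, ⟨(b - k).toNat, hkt, hmemN⟩, hmod2.trans hmm.symm⟩
    have hlb : ∀ x ∈ {n : ℤ | 1 ≤ n ∧ n ∈ postP A ∧ n % b = k * h % b % b},
        (b - k) * (b - h) ≤ x := by
      rintro x ⟨hx1, ⟨N, hN1, hxN⟩, hxmod⟩
      obtain ⟨y, z, w, hle, rfl⟩ := (mem_nfold_iff_s17 hA N x).mp hxN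
      rcases lower_n h b k h1 h2 hgcd hk1 hk2 y z w _ rfl (hxmod.trans hmm) with hc | hc
      · nlinarith
      · exact hc
    have hnmin : nmin A b (k * h % b) = (b - k) * (b - h) := by
      unfold nmin
      exact le_antisymm (csInf_le ⟨(b - k) * (b - h), fun x hx => hlb x hx⟩ hmemS)
        (le_csInf ⟨_, hmemS⟩ hlb)
    refine ⟨hnmin, ?_⟩
    have hNset : {N : ℕ | 1 ≤ N ∧ nmin A b (k * h % b) ∈ nfold A N}
        = {N : ℕ | 1 ≤ N ∧ (b - k) * (b - h) ∈ nfold A N} := by rw [hnmin]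
    have hmemN' : (b - k).toNat ∈ {N : ℕ | 1 ≤ N ∧ (b - k) * (b - h) ∈ nfold A N} :=
      ⟨hkt, hmemN⟩
    have hlbN : ∀ N ∈ {N : ℕ | 1 ≤ N ∧ (b - k) * (b - h) ∈ nfold A N}, (b - k).toNat ≤ N := by
      rintro N ⟨hN1, hNm⟩
      obtain ⟨y, z, w, hle, heq⟩ := (mem_nfold_iff_s17 hA N _).mp hNm
      have := Nlower2 h b k h1 h2 hgcd hk2 hge y z w heq
      omega
    have hNv : Nmin A b (k * h % b) = (b - k).toNat := by
      unfold Nmin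
      rw [hNset]
      exact le_antisymm (Nat.sInf_le hmemN') (hlbN _ (Nat.sInf_mem ⟨_, hmemN'⟩))
    rw [hNv]
    omega
end
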